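/- Let m ≥ 1 and k ≥ 1 be integers, let P₁, P₂ ∈ B₃⁺, set P = P₁·a₁·(a₁·a₂·⋯·a_{2k})·a_{2k}·P₂ (generator indices modulo 3; for k = 1 the inserted subword is a₁²·a₂²) and α = δ^{−m}·P. Suppose π(α) is a 3-cycle, α is a summit element with summit exponent −m, m ≥ 2k + 1, and m ≤ e(P) − 1. Then min{|β| : β is conjugate to α} = e(P), and there exists a list s of elements of {a_i, a_i⁻¹ : i ∈ ZMod 3} of length e(P) − (2k+2) such that a₁·a₂^{−2k}·a₁⁻¹·(∏s) is conjugate to α; that is, α is conjugate to a₁a₂^{−2k}a₁⁻¹W which is a shortest word in its conjugacy class. -/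

import Mathlib

/-!
A band-generator word with `q` inverse letters equals `δ^{-q}` times a positive word of the same
length, because `a_i⁻¹ = δ⁻¹ a_{i+1}` and conjugation by `δ` permutes the generators. For a
conjugate of a summit element with summit exponent `-m` this forces `q ≥ m`, and comparing exponent
sums gives every word for it at least `e(α) + 2m = e(P)` letters.

Conversely, the ascending word satisfies
`a_i a_{i+1} ⋯ a_{i+n-1} a_{i+n-1} = a_{i+1}^{-n} a_i⁻¹ δ^{n+1}`, so a cyclic conjugate of `α` is
`a₁ a₂^{-2k} a₁⁻¹ δ^{-r} Q` with `Q` positive of length `e(P) - 2k - 2` and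
`r = m - 2k - 1 ≤ e(Q)`. Absorbing each factor `δ⁻¹` into one letter of `Q` (`δ⁻¹ a_i = a_{i-1}⁻¹`)
spells this conjugate with exactly `e(P)` letters.
-/

namespace Braid

/-- Relations of the dual (band-generator) presentation of the 3-braid group:
`a (i+1) * a i = a (i+2) * a (i+1)` for all `i : ZMod 3`. -/
def braidRels : Set (FreeGroup (ZMod 3)) :=
  { r | ∃ i : ZMod 3,
      r = FreeGroup.of (i + 1) * FreeGroup.of i *
          (FreeGroup.of (i + 2) * FreeGroup.of (i + 1))⁻¹ }

/-- The 3-braid group with the band-generator presentation. -/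
abbrev B3 := PresentedGroup braidRels

/-- The band generators `a i`, `i : ZMod 3`. -/
def a (i : ZMod 3) : B3 := PresentedGroup.of i

/-- The fundamental element `δ = a₂ * a₁`. -/
def δ : B3 := a 2 * a 1

/-- The submonoid of positive braids. -/
def Pos : Submonoid B3 := Submonoid.closure (Set.range a)

/-- The exponent-sum homomorphism, sending each generator to `1 : ℤ`. -/
def eHom : B3 →* Multiplicative ℤ :=
  PresentedGroup.toGroup (f := fun _ => Multiplicative.ofAdd (1 : ℤ)) (by
    rintro r ⟨i, rfl⟩
    simp only [map_mul, map_inv, FreeGroup.lift_apply_of]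
    group)

/-- The exponent sum (letter length on positive braids) as an integer. -/
def elen (x : B3) : ℤ := Multiplicative.toAdd (eHom x)

/-- The right complement `X* = X⁻¹ * δ^{e(X)}`. -/
def rc (X : B3) : B3 := X⁻¹ * δ ^ elen X

/-- The `n`-th power of the rotation automorphism `τ`: `τ^n (x) = δ^{-n} * x * δ^n`. -/
def tauPow (n : ℤ) (x : B3) : B3 := δ ^ (-n) * x * δ ^ n

/-- The positive braid represented by a list of generator indices. -/
def wordProd (l : List (ZMod 3)) : B3 := (l.map a).prod

/-- A word is nondecreasing if each letter index is the previous one or the previous one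
plus `1` (mod 3). -/
def NDWord (l : List (ZMod 3)) : Prop :=
  l.Chain' (fun x y => y = x ∨ y = x + 1)

/-- The syllable number of a word: the number of maximal constant blocks. -/
def syl : List (ZMod 3) → ℕ
  | [] => 0
  | [_] => 1
  | x :: y :: t => (if x = y then 0 else 1) + syl (y :: t)

/-- The permutations underlying the band generators. -/
def perm3 (i : ZMod 3) : Equiv.Perm (Fin 3) :=
  if i = 0 then Equiv.swap 0 2 else if i = 1 then Equiv.swap 0 1 else Equiv.swap 1 2

lemma perm3_rel : ∀ i : ZMod 3,
    perm3 (i + 1) * perm3 i * (perm3 (i + 2) * perm3 (i + 1))⁻¹ = 1 := by decide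

/-- The homomorphism to the symmetric group on 3 letters (underlying permutation). -/
def permOf : B3 →* Equiv.Perm (Fin 3) :=
  PresentedGroup.toGroup (f := perm3) (by
    rintro r ⟨i, rfl⟩
    simp only [map_mul, map_inv, FreeGroup.lift_apply_of]
    exact perm3_rel i)

/-- The set of band generators and their inverses. -/
def genSet : Set B3 := Set.range a ∪ Set.range (fun i => (a i)⁻¹)

/-- The band-generator word length of a 3-braid. -/
noncomputable def wordLen (x : B3) : ℕ :=
  sInf { n | ∃ s : List B3, s.length = n ∧ (∀ g ∈ s, g ∈ genSet) ∧ s.prod = x }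

/-- The minimal band-generator word length in the conjugacy class. -/
noncomputable def minConjLen (x : B3) : ℕ :=
  sInf { n | ∃ y, IsConj x y ∧ wordLen y = n }

/-- `α` is a summit element with summit exponent `u` if `δ^{-u} * α` is positive and `u` is
the maximal such exponent over the conjugacy class. -/
def IsSummit (α : B3) (u : ℤ) : Prop :=
  δ ^ (-u) * α ∈ Pos ∧ ∀ β : B3, IsConj α β → ∀ v : ℤ, δ ^ (-v) * β ∈ Pos → v ≤ u

lemma braid_rel (i : ZMod 3) : a (i + 1) * a i = a (i + 2) * a (i + 1) :=
  PresentedGroup.mk_eq_mk_of_mul_inv_mem ⟨i, rfl⟩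

lemma a_succ_mul_a (i : ZMod 3) : a (i + 1) * a i = δ := by
  have h0 := braid_rel 0
  have h2 := braid_rel 2
  fin_cases i
  exacts [h0, rfl, h2.trans h0]

lemma delta_mul_a (i : ZMod 3) : δ * a i = a (i + 2) * δ := by
  calc δ * a i = a (i + 2) * a (i + 1) * a i := by
        rw [← a_succ_mul_a (i + 1), add_assoc, one_add_one_eq_two]
    _ = a (i + 2) * δ := by rw [mul_assoc, a_succ_mul_a]

lemma zpow_delta_conj_a (t : ℤ) (i : ZMod 3) : δ ^ t * a i * (δ ^ t)⁻¹ = a (i + 2 * t) := by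
  have conj_delta (j : ZMod 3) : δ * a j * δ⁻¹ = a (j + 2) := by
    rw [delta_mul_a, mul_inv_cancel_right]
  have conj_delta_inv (j : ZMod 3) : δ⁻¹ * a j * δ = a (j - 2) := by
    have h := conj_delta (j - 2)
    rw [sub_add_cancel] at h
    rw [← h]
    group
  induction t using Int.induction_on with
  | zero => simp
  | succ t ih =>
    rw [zpow_add_one, show δ ^ (t : ℤ) * δ * a i * (δ ^ (t : ℤ) * δ)⁻¹ =
      δ * (δ ^ (t : ℤ) * a i * (δ ^ (t : ℤ))⁻¹) * δ⁻¹ by group, ih, conj_delta]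
    push_cast; ring_nf
  | pred t ih =>
    rw [zpow_sub_one, show δ ^ (-(t : ℤ)) * δ⁻¹ * a i * (δ ^ (-(t : ℤ)) * δ⁻¹)⁻¹ =
      δ⁻¹ * (δ ^ (-(t : ℤ)) * a i * (δ ^ (-(t : ℤ)))⁻¹) * δ by group, ih, conj_delta_inv]
    push_cast; ring_nf

lemma a_mem_Pos (i : ZMod 3) : a i ∈ Pos := Submonoid.subset_closure ⟨i, rfl⟩

lemma zpow_delta_conj_mem_Pos (t : ℤ) {x : B3} (hx : x ∈ Pos) : δ ^ t * x * (δ ^ t)⁻¹ ∈ Pos := by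
  have : Pos ≤ Pos.comap (MulAut.conj (δ ^ t)).toMonoidHom := by
    refine Submonoid.closure_le.2 ?_
    rintro _ ⟨i, rfl⟩
    change δ ^ t * a i * (δ ^ t)⁻¹ ∈ Pos
    rw [zpow_delta_conj_a]
    exact a_mem_Pos _
  exact this hx

lemma zpow_delta_conj_mem_genSet (t : ℤ) {g : B3} (hg : g ∈ genSet) :
    δ ^ t * g * (δ ^ t)⁻¹ ∈ genSet := by
  rcases hg with ⟨i, rfl⟩ | ⟨i, rfl⟩
  · exact Or.inl ⟨_, (zpow_delta_conj_a t i).symm⟩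
  · refine Or.inr ⟨i + 2 * t, ?_⟩
    simp only [← zpow_delta_conj_a t i]
    group

lemma prod_ofFn_a_mul_a (i : ZMod 3) (n : ℕ) :
    (List.ofFn fun j : Fin n => a (i + j)).prod * a (i + n - 1) =
      a (i + 1) ^ (-(n : ℤ)) * (a i)⁻¹ * δ ^ ((n : ℤ) + 1) := by
  have a_eq (j : ZMod 3) : a j = (a (j + 1))⁻¹ * δ := by rw [← a_succ_mul_a]; group
  have delta_mul_zpow (j : ZMod 3) (t : ℤ) : δ * a j ^ t = a (j + 2) ^ t * δ := by
    have h := zpow_delta_conj_a 1 j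
    rw [zpow_one, Int.cast_one, mul_one] at h
    rw [← h, conj_zpow, inv_mul_cancel_right]
  induction n generalizing i with
  | zero =>
    rw [List.ofFn_zero, List.prod_nil, one_mul, a_eq]
    simp
  | succ n ih =>
    have hshift : (List.ofFn fun j : Fin n => a (i + (j.succ : ℕ))) =
        List.ofFn fun j : Fin n => a (i + 1 + j) := by
      simp only [Fin.val_succ, Nat.cast_add, Nat.cast_one]
      ring_nf
    rw [List.ofFn_succ, List.prod_cons, hshift, mul_assoc,
      show i + ((n + 1 : ℕ) : ZMod 3) - 1 = i + 1 + n - 1 by grind, ih (i + 1)]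
    simp only [Fin.val_zero, Nat.cast_zero, add_zero]
    calc a i * (a (i + 1 + 1) ^ (-(n : ℤ)) * (a (i + 1))⁻¹ * δ ^ ((n : ℤ) + 1))
        = (a (i + 1))⁻¹ * (δ * a (i + 2) ^ (-(n : ℤ))) * (a (i + 1))⁻¹ * δ ^ ((n : ℤ) + 1) := by
          rw [a_eq i, add_assoc, one_add_one_eq_two]
          group
      _ = a (i + 1) ^ (-((n + 1 : ℕ) : ℤ)) * (δ * a (i + 1) ^ (-1 : ℤ)) * δ ^ ((n : ℤ) + 1) := by
          rw [delta_mul_zpow, show i + 2 + 2 = i + 1 by grind]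
          push_cast
          group
      _ = a (i + 1) ^ (-((n + 1 : ℕ) : ℤ)) * (a i)⁻¹ * δ ^ (((n + 1 : ℕ) : ℤ) + 1) := by
          rw [delta_mul_zpow, show i + 1 + 2 = i by grind]
          push_cast
          group

@[simp] lemma elen_mul (x y : B3) : elen (x * y) = elen x + elen y := by simp [elen]

@[simp] lemma elen_inv (x : B3) : elen x⁻¹ = -elen x := by simp [elen]

@[simp] lemma elen_zpow (x : B3) (t : ℤ) : elen (x ^ t) = t * elen x := by simp [elen]

@[simp] lemma elen_a (i : ZMod 3) : elen (a i) = 1 := by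
  simp [elen, eHom, a, PresentedGroup.toGroup.of]

@[simp] lemma elen_delta : elen δ = 2 := by
  rw [δ, elen_mul, elen_a, elen_a]
  norm_num

lemma elen_nonneg_of_mem_Pos {p : B3} (hp : p ∈ Pos) : 0 ≤ elen p := by
  induction hp using Submonoid.closure_induction with
  | mem x hx => obtain ⟨i, rfl⟩ := hx; simp
  | one => simp [elen]
  | mul x y _ _ hx hy => rw [elen_mul]; positivity

lemma elen_eq_of_isConj {x y : B3} (h : IsConj x y) : elen x = elen y := by
  rw [elen, elen, isConj_iff_eq.1 (eHom.map_isConj h)]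

lemma exists_zpow_delta_mul_mem_Pos {s : List B3} (hs : ∀ g ∈ s, g ∈ genSet) :
    ∃ q : ℕ, δ ^ (q : ℤ) * s.prod ∈ Pos ∧ (s.length : ℤ) = elen s.prod + 2 * q := by
  induction s with
  | nil => exact ⟨0, by simp [one_mem], by simp [elen]⟩
  | cons g t ih =>
    obtain ⟨q, hq, hlen⟩ := ih fun x hx => hs x (List.mem_cons_of_mem g hx)
    have hmem (i : ZMod 3) : δ ^ (q : ℤ) * (a i * t.prod) ∈ Pos := by
      rw [show δ ^ (q : ℤ) * (a i * t.prod) =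
        δ ^ (q : ℤ) * a i * (δ ^ (q : ℤ))⁻¹ * (δ ^ (q : ℤ) * t.prod) by group]
      exact mul_mem (zpow_delta_conj_mem_Pos _ (a_mem_Pos i)) hq
    rcases hs g List.mem_cons_self with ⟨i, rfl⟩ | ⟨i, rfl⟩
    · exact ⟨q, hmem i, by
        rw [List.length_cons, List.prod_cons, elen_mul, elen_a]; push_cast; linarith⟩
    · refine ⟨q + 1, ?_, by
        rw [List.length_cons, List.prod_cons, elen_mul, elen_inv, elen_a]; push_cast; linarith⟩
      rw [List.prod_cons, show δ ^ ((q + 1 : ℕ) : ℤ) * ((a i)⁻¹ * t.prod) =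
        δ ^ (q : ℤ) * (a (i + 1) * a i * (a i)⁻¹ * t.prod) by rw [a_succ_mul_a]; push_cast; group]
      simpa using hmem (i + 1)

lemma exists_genWord_eq_zpow_delta_mul {p : B3} (hp : p ∈ Pos) {r : ℕ} (hr : (r : ℤ) ≤ elen p) :
    ∃ s : List B3, (∀ g ∈ s, g ∈ genSet) ∧ (s.length : ℤ) = elen p ∧
      s.prod = δ ^ (-(r : ℤ)) * p := by
  obtain ⟨L, hL, rfl⟩ := Submonoid.exists_list_of_mem_closure hp
  clear hp
  induction L generalizing r with
  | nil =>
    obtain rfl : r = 0 := by simpa [elen] using hr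
    exact ⟨[], by simp, by simp [elen], by simp⟩
  | cons x t ih =>
    obtain ⟨i, rfl⟩ := hL x List.mem_cons_self
    have ht (y) (hy : y ∈ t) : y ∈ Set.range a := hL y (List.mem_cons_of_mem _ hy)
    cases r with
    | zero =>
      have ht_pos : t.prod ∈ Pos :=
        Submonoid.list_prod_mem _ fun y hy => Submonoid.subset_closure (ht y hy)
      obtain ⟨s, hsg, hslen, hsprod⟩ :=
        ih ht (r := 0) (by simpa using elen_nonneg_of_mem_Pos ht_pos)
      exact ⟨a i :: s, List.forall_mem_cons.2 ⟨Or.inl ⟨i, rfl⟩, hsg⟩,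
        by rw [List.length_cons, List.prod_cons, elen_mul, elen_a]; push_cast; linarith,
        by simp [hsprod]⟩
    | succ r =>
      obtain ⟨s, hsg, hslen, hsprod⟩ := ih ht (r := r) (by
        simp only [Nat.cast_add, Nat.cast_one, List.prod_cons, elen_mul, elen_a] at hr
        linarith)
      have hinv : (a (i - 1))⁻¹ = δ⁻¹ * a i := by
        rw [← a_succ_mul_a (i - 1), sub_add_cancel]
        group
      refine ⟨δ ^ (-(r : ℤ)) * (a (i - 1))⁻¹ * (δ ^ (-(r : ℤ)))⁻¹ :: s,
        List.forall_mem_cons.2 ⟨zpow_delta_conj_mem_genSet _ (Or.inr ⟨_, rfl⟩), hsg⟩,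
        by rw [List.length_cons, List.prod_cons, elen_mul, elen_a]; push_cast; linarith, ?_⟩
      rw [List.prod_cons, List.prod_cons, hsprod, hinv]
      push_cast
      group

lemma IsSummit.elen_sub_two_mul_le_length {α : B3} {u : ℤ} (hα : IsSummit α u) {s : List B3}
    (hs : ∀ g ∈ s, g ∈ genSet) (hconj : IsConj α s.prod) : elen α - 2 * u ≤ s.length := by
  obtain ⟨q, hq, hlen⟩ := exists_zpow_delta_mul_mem_Pos hs
  have hqu : -(q : ℤ) ≤ u := hα.2 _ hconj _ (by rwa [neg_neg])
  rw [elen_eq_of_isConj hconj]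
  linarith

lemma exists_genWord (y : B3) : ∃ s : List B3, (∀ g ∈ s, g ∈ genSet) ∧ s.prod = y := by
  have hy : y ∈ Subgroup.closure (Set.range (PresentedGroup.of (rels := braidRels))) := by simp
  induction hy using Subgroup.closure_induction'' with
  | mem x hx =>
    obtain ⟨i, rfl⟩ := hx
    exact ⟨[a i], by simp [genSet], by simp [a]⟩
  | inv_mem x hx =>
    obtain ⟨i, rfl⟩ := hx
    exact ⟨[(a i)⁻¹], by simp [genSet], by simp [a]⟩
  | one => exact ⟨[], by simp, rfl⟩
  | mul x y _ _ hx hy =>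
    obtain ⟨s, hs, rfl⟩ := hx
    obtain ⟨t, ht, rfl⟩ := hy
    exact ⟨s ++ t, by simpa [or_imp, forall_and] using ⟨hs, ht⟩, List.prod_append⟩

lemma exists_genWord_length_eq_wordLen (y : B3) :
    ∃ s : List B3, s.length = wordLen y ∧ (∀ g ∈ s, g ∈ genSet) ∧ s.prod = y := by
  obtain ⟨s, hs, rfl⟩ := exists_genWord y
  exact Nat.sInf_mem (s := {n | ∃ t : List B3, t.length = n ∧ (∀ g ∈ t, g ∈ genSet) ∧
    t.prod = s.prod}) ⟨s.length, s, rfl, hs, rfl⟩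

lemma minConjLen_eq_length {α : B3} {s : List B3} (hs : ∀ g ∈ s, g ∈ genSet)
    (hconj : IsConj α s.prod)
    (hmin : ∀ t : List B3, (∀ g ∈ t, g ∈ genSet) → IsConj α t.prod → s.length ≤ t.length) :
    minConjLen α = s.length := by
  have le_wordLen (y : B3) (hy : IsConj α y) : s.length ≤ wordLen y := by
    obtain ⟨t, ht, htg, rfl⟩ := exists_genWord_length_eq_wordLen y
    exact ht ▸ hmin t htg hy
  have hwordLen : wordLen s.prod = s.length :=
    le_antisymm (Nat.sInf_le ⟨s, rfl, hs, rfl⟩) (le_wordLen _ hconj)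
  exact le_antisymm (Nat.sInf_le ⟨_, hconj, hwordLen⟩)
    (le_csInf ⟨_, _, hconj, hwordLen⟩ (by rintro _ ⟨y, hy, rfl⟩; exact le_wordLen y hy))

lemma IsSummit.minConjLen_eq {α : B3} {u : ℤ} (hα : IsSummit α u) {w : List B3}
    (hw : ∀ g ∈ w, g ∈ genSet) (hconj : IsConj α w.prod)
    (hlen : (w.length : ℤ) = elen α - 2 * u) :
    (minConjLen α : ℤ) = elen α - 2 * u := by
  rw [minConjLen_eq_length hw hconj fun t ht htc => ?_, hlen]
  exact_mod_cast hlen ▸ hα.elen_sub_two_mul_le_length ht htc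

lemma exists_genWord_eq_mul_zpow_mul_inv (i j : ZMod 3) (n : ℕ) {s : List B3}
    (hs : ∀ g ∈ s, g ∈ genSet) :
    ∃ w : List B3, (∀ g ∈ w, g ∈ genSet) ∧ w.length = s.length + n + 2 ∧
      w.prod = a i * a j ^ (-(n : ℤ)) * (a i)⁻¹ * s.prod := by
  refine ⟨a i :: (List.replicate n (a j)⁻¹ ++ (a i)⁻¹ :: s), ?_,
    by simp only [List.length_cons, List.length_append, List.length_replicate]; ring, ?_⟩
  · simp only [List.forall_mem_cons, List.forall_mem_append, List.mem_replicate]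
    exact ⟨Or.inl ⟨i, rfl⟩, fun g hg => hg.2 ▸ Or.inr ⟨j, rfl⟩, Or.inr ⟨i, rfl⟩, hs⟩
  · simp only [List.prod_cons, List.prod_append, List.prod_replicate, inv_pow, zpow_neg,
      zpow_natCast]
    group

theorem lemma_B_ii_general (m k : ℕ) (P₁ P₂ : B3)
    (h₁ : P₁ ∈ Pos) (h₂ : P₂ ∈ Pos) (P α : B3)
    (hP : P = P₁ * a 1 *
        (List.ofFn (fun j : Fin (2 * k) => a (((j : ℕ) : ZMod 3) + 1))).prod *
        a ((2 * k : ℕ) : ZMod 3) * P₂)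
    (hα : α = δ ^ (-(m : ℤ)) * P)
    (hs : IsSummit α (-(m : ℤ)))
    (hge : 2 * k + 1 ≤ m)
    (hle : (m : ℤ) ≤ elen P - 1) :
    (minConjLen α : ℤ) = elen P ∧
    ∃ s : List B3, (∀ g ∈ s, g ∈ genSet) ∧
      (s.length : ℤ) = elen P - (2 * (k : ℤ) + 2) ∧
      IsConj α (a 1 * (a 2) ^ (-(2 * (k : ℤ))) * (a 1)⁻¹ * s.prod) := by
  have hW := prod_ofFn_a_mul_a 1 (2 * k)
  simp only [add_comm (1 : ZMod 3), add_sub_cancel_right, one_add_one_eq_two] at hW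
  rw [mul_assoc (P₁ * a 1), hW] at hP
  set Q := δ ^ (m : ℤ) * P₂ * (δ ^ (m : ℤ))⁻¹ * P₁
  have hQ : Q ∈ Pos := mul_mem (zpow_delta_conj_mem_Pos _ h₂) h₁
  have helenP : elen P = elen Q + 2 * k + 2 := by
    simp only [hP, Q, elen_mul, elen_inv, elen_zpow, elen_a, elen_delta]
    push_cast
    ring
  have helenα : elen α = elen P - 2 * m := by simp only [hα, elen_mul, elen_zpow, elen_delta]; ring
  obtain ⟨s, hsg, hslen, hsprod⟩ :=
    exists_genWord_eq_zpow_delta_mul hQ (r := m - (2 * k + 1)) (by omega)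
  have hconj : IsConj α (a 1 * a 2 ^ (-(2 * (k : ℤ))) * (a 1)⁻¹ * s.prod) := by
    rw [hsprod, hα, hP, isConj_iff, show -((m - (2 * k + 1) : ℕ) : ℤ) = 2 * k + 1 - m by omega]
    exact ⟨(δ ^ (-(m : ℤ)) * P₁)⁻¹, by simp only [Q]; push_cast; group⟩
  obtain ⟨w, hwg, hwlen, hw⟩ := exists_genWord_eq_mul_zpow_mul_inv 1 2 (2 * k) hsg
  push_cast at hw hwlen
  have hmin := hs.minConjLen_eq hwg (hw ▸ hconj) (by linarith)
  exact ⟨by linarith, s, hsg, by linarith, hconj⟩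

/-- Lemma 4.2(ii): if `α = δ^{-m} P₁ a₁² a₂ ⋯ a_{2k-1} a_{2k}² P₂` is a summit element closing
to a knot, with `2k+1 ≤ m ≤ |P| - 1`, then `α` is conjugate to `a₁ a₂^{-2k} a₁⁻¹ W` which is
a shortest word in its conjugacy class. -/
theorem lemma_B_ii (m k : ℕ) (hm : 1 ≤ m) (hk : 1 ≤ k) (P₁ P₂ : B3)
    (h₁ : P₁ ∈ Pos) (h₂ : P₂ ∈ Pos) (P α : B3)
    (hP : P = P₁ * a 1 *
        (List.ofFn (fun j : Fin (2 * k) => a (((j : ℕ) : ZMod 3) + 1))).prod *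
        a ((2 * k : ℕ) : ZMod 3) * P₂)
    (hα : α = δ ^ (-(m : ℤ)) * P)
    (h3 : (permOf α).IsThreeCycle)
    (hs : IsSummit α (-(m : ℤ)))
    (hge : 2 * k + 1 ≤ m)
    (hle : (m : ℤ) ≤ elen P - 1) :
    (minConjLen α : ℤ) = elen P ∧
    ∃ s : List B3, (∀ g ∈ s, g ∈ genSet) ∧
      (s.length : ℤ) = elen P - (2 * (k : ℤ) + 2) ∧
      IsConj α (a 1 * (a 2) ^ (-(2 * (k : ℤ))) * (a 1)⁻¹ * s.prod) :=
  lemma_B_ii_general m k P₁ P₂ h₁ h₂ P α hP hα hs hge hle
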